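/- Let h ∈ ℕ and let p be a prime. If p ≠ 3, then ℳ_{3,3}(p^h) = ℤ/p^hℤ, i.e. every residue class modulo p^h is of the form x1³ + x2³ + x3³ with p ∤ x1. If p = 3, then ℳ_{3,3}(3) = ℤ/3ℤ, and for h ≥ 2 one has ℳ_{3,3}(3^h) = { x ∈ ℤ/3^hℤ : x ≢ 4 (mod 9) and x ≢ 5 (mod 9) }. -/

import Mathlib

open scoped Real Classical
open Finset MeasureTheory

noncomputable section

/-- `e x = exp(2πix)`. -/
def e (x : ℝ) : ℂ := Complex.exp (2 * (Real.pi : ℂ) * Complex.I * (x : ℂ))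

/-- `T x = x₁³ + x₂³ + x₃³` for triples of naturals. -/
def Tn (x : Fin 3 → ℕ) : ℕ := x 0 ^ 3 + x 1 ^ 3 + x 2 ^ 3

/-- `T x = x₁³ + x₂³ + x₃³` for triples of reals. -/
def Tr (x : Fin 3 → ℝ) : ℝ := x 0 ^ 3 + x 1 ^ 3 + x 2 ^ 3

/-- The set `𝒞` of positive integers that are sums of three positive integral cubes. -/
def SumThreeCubes : Set ℕ := {m | ∃ x : Fin 3 → ℕ, (∀ i, 1 ≤ x i) ∧ Tn x = m}

/-- `P = n^{1/(3k)}`. -/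
def PP (k n : ℕ) : ℝ := (n : ℝ) ^ ((1 : ℝ) / (3 * k))

/-- `r₃(m)`: number of representations of `m` as `T x` with `1 ≤ xᵢ ≤ P`. -/
def r3 (k n m : ℕ) : ℕ :=
  Nat.card {x : Fin 3 → ℕ // (∀ i, 1 ≤ x i ∧ (x i : ℝ) ≤ PP k n) ∧ Tn x = m}

/-- `m ∈ 𝒜(X,R)`: `1 ≤ m ≤ X` and every prime factor of `m` is at most `R`. -/
def SmoothIn (X R : ℝ) (m : ℕ) : Prop :=
  1 ≤ m ∧ (m : ℝ) ≤ X ∧ ∀ p : ℕ, p.Prime → p ∣ m → (p : ℝ) ≤ R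

/-- Membership in `𝒞(P)`: triples `x` with `1 ≤ xᵢ ≤ P` and `x₀, x₁ ∈ 𝒜(P, P^η)`. -/
def InCP (k n : ℕ) (η : ℝ) (x : Fin 3 → ℕ) : Prop :=
  (∀ i, 1 ≤ x i ∧ (x i : ℝ) ≤ PP k n) ∧
    SmoothIn (PP k n) (PP k n ^ η) (x 0) ∧ SmoothIn (PP k n) (PP k n ^ η) (x 1)

/-- `s₃(m)`: number of representations of `m` as `T x` with `x ∈ 𝒞(P)`. -/
def s3 (k n : ℕ) (η : ℝ) (m : ℕ) : ℕ :=
  Nat.card {x : Fin 3 → ℕ // InCP k n η x ∧ Tn x = m}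

/-- `R(n)`: representations of `n` as sums of `s` `k`-th powers of sums of three cubes,
counted with the multiplicities `r₃`. -/
def RR (k s n : ℕ) : ℝ :=
  ∑' X : {X : Fin s → ℕ // (∀ i, X i ∈ SumThreeCubes) ∧ ∑ i, X i ^ k = n},
    ∏ i, (r3 k n (X.1 i) : ℝ)

/-- `R_η(n)`: as `R(n)` but with the multiplicities `s₃`. -/
def Reta (k s n : ℕ) (η : ℝ) : ℝ :=
  ∑' X : {X : Fin s → ℕ // (∀ i, X i ∈ SumThreeCubes) ∧ ∑ i, X i ^ k = n},
    ∏ i, (s3 k n η (X.1 i) : ℝ)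

/-- `r(n)`: representations of `n` as sums of `s` `k`-th powers of elements of `𝒞`,
counted without multiplicities. -/
def rcount (k s n : ℕ) : ℕ :=
  Nat.card {X : Fin s → ℕ // (∀ i, X i ∈ SumThreeCubes) ∧ ∑ i, X i ^ k = n}

/-- The complete exponential sum `S(q,a) = Σ_{1 ≤ r ≤ q} e_q(a T(r)^k)`. -/
def Sqa (k q : ℕ) (a : ℤ) : ℂ :=
  ∑ r ∈ Fintype.piFinset (fun _ : Fin 3 => Finset.Icc 1 q),
    e (((a * (Tn r : ℤ) ^ k : ℤ) : ℝ) / q)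

/-- `S_k(q,a) = Σ_{r=1}^{q} e_q(a r^k)`. -/
def Ska (k q : ℕ) (a : ℤ) : ℂ :=
  ∑ r ∈ Finset.Icc 1 q, e (((a * (r : ℤ) ^ k : ℤ) : ℝ) / q)

/-- `S_n(q) = Σ_{a=1,(a,q)=1}^{q} (q^{-3} S(q,a))^s e_q(-na)`. -/
def Snq (k s n q : ℕ) : ℂ :=
  ∑ a ∈ (Finset.Icc 1 q).filter (fun a => Nat.gcd a q = 1),
    (((q : ℂ) ^ 3)⁻¹ * Sqa k q (a : ℤ)) ^ s * e (-(((a * n : ℕ) : ℝ) / q))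

/-- `S_s^*(q) = Σ_{a=1,(a,q)=1}^{q} |q^{-3} S(q,a)|^s`. -/
def Ssstar (k s q : ℕ) : ℝ :=
  ∑ a ∈ (Finset.Icc 1 q).filter (fun a => Nat.gcd a q = 1),
    ‖((q : ℂ) ^ 3)⁻¹ * Sqa k q (a : ℤ)‖ ^ s

/-- The singular series `𝔖(n) = Σ_{q ≥ 1} S_n(q)`. -/
def SingSeries (k s n : ℕ) : ℂ := ∑' q : ℕ, Snq k s n (q + 1)

/-- The Weyl sum `f(α) = Σ_{1 ≤ x ≤ P} e(α T(x)^k)`. -/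
def fexp (k n : ℕ) (α : ℝ) : ℂ :=
  ∑ x ∈ Fintype.piFinset (fun _ : Fin 3 => Finset.Icc 1 ⌊PP k n⌋₊),
    e (α * ((Tn x : ℝ)) ^ k)

/-- The smooth Weyl sum `g(α) = Σ_{x ∈ 𝒞(P)} e(α T(x)^k)`. -/
def gexp (k n : ℕ) (η : ℝ) (α : ℝ) : ℂ :=
  ∑ x ∈ (Fintype.piFinset (fun _ : Fin 3 => Finset.Icc 1 ⌊PP k n⌋₊)).filter
      (fun x => InCP k n η x),
    e (α * ((Tn x : ℝ)) ^ k)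

/-- The major arcs `𝔐` of level `P^ξ`. -/
def majorArcs (k n : ℕ) (ξ : ℝ) : Set ℝ :=
  ⋃ q : ℕ, ⋃ a : ℕ,
    ⋃ (_ : 1 ≤ q ∧ a ≤ q ∧ (q : ℝ) ≤ PP k n ^ ξ ∧ Nat.gcd a q = 1),
      {α ∈ Set.Ico (0 : ℝ) 1 | |α - (a : ℝ) / q| ≤ PP k n ^ ξ / ((q : ℝ) * n)}

/-- The minor arcs `𝔪 = [0,1) ∖ 𝔐`. -/
def minorArcs (k n : ℕ) (ξ : ℝ) : Set ℝ := Set.Ico (0 : ℝ) 1 \ majorArcs k n ξ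

/-- The major arcs `𝔑` (with `κ = 1/5`). -/
def majorArcsN (k n : ℕ) : Set ℝ :=
  ⋃ q : ℕ, ⋃ a : ℕ,
    ⋃ (_ : 1 ≤ q ∧ a ≤ q ∧ (q : ℝ) ≤ Real.log (PP k n) ^ ((1 : ℝ) / 5) ∧ Nat.gcd a q = 1),
      {α ∈ Set.Ico (0 : ℝ) 1 |
        |α - (a : ℝ) / q| ≤ Real.log (PP k n) ^ ((1 : ℝ) / 5) / ((q : ℝ) * PP k n ^ (3 * k))}

/-- The minor arcs `𝔫 = [0,1) ∖ 𝔑`. -/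
def minorArcsN (k n : ℕ) : Set ℝ := Set.Ico (0 : ℝ) 1 \ majorArcsN k n

/-- `v(β) = ∫_{[0,P]³} e(β T(x)^k) dx`. -/
def vint (k n : ℕ) (β : ℝ) : ℂ :=
  ∫ x in Set.univ.pi (fun _ : Fin 3 => Set.Icc (0 : ℝ) (PP k n)), e (β * Tr x ^ k)

/-- The constant `Γ(4/3)^{3s} Γ(1+1/k)^s Γ(s/k)^{-1}`. -/
def MainC (k s : ℕ) : ℝ :=
  Real.Gamma (4 / 3) ^ (3 * s) * Real.Gamma (1 + 1 / k) ^ s * (Real.Gamma ((s : ℝ) / k))⁻¹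

/-- The defining properties of Dickman's function `ρ`. -/
def IsDickman (ρ : ℝ → ℝ) : Prop :=
  (∀ x : ℝ, x < 0 → ρ x = 0) ∧ (∀ x : ℝ, 0 ≤ x → x ≤ 1 → ρ x = 1) ∧
    ContinuousOn ρ (Set.Ioi (0 : ℝ)) ∧ (∀ x : ℝ, 1 < x → DifferentiableAt ℝ ρ x) ∧
    (∀ x : ℝ, 1 < x → x * deriv ρ x = -ρ (x - 1))

/-- `A_r(m)`: the number of `P^η`-smooth numbers `x ≤ m` with `x ≡ r (mod q)`. -/
def Acount (P η : ℝ) (q r m : ℕ) : ℕ :=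
  Nat.card {x : ℕ // 1 ≤ x ∧ x ≤ m ∧ (∀ p : ℕ, p.Prime → p ∣ x → (p : ℝ) ≤ P ^ η) ∧
    x % q = r}

/-- The Vinogradov exponential sum `f_k(α; X) = Σ_{1 ≤ x ≤ X} e(α₁ x + ⋯ + α_k x^k)`. -/
def fkV (k : ℕ) (α : Fin k → ℝ) (X : ℝ) : ℂ :=
  ∑ x ∈ Finset.Icc 1 ⌊X⌋₊, e (∑ j : Fin k, α j * (x : ℝ) ^ ((j : ℕ) + 1))

/-- `ℳ_{3,3}(q)` (for `q = p^h`): residues of the form `x₁³+x₂³+x₃³` with `p ∤ x₁`. -/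
def M33 (q p : ℕ) : Set (ZMod q) :=
  {y | ∃ x : Fin 3 → ℤ, ¬ (p : ℤ) ∣ x 0 ∧ ((x 0 ^ 3 + x 1 ^ 3 + x 2 ^ 3 : ℤ) : ZMod q) = y}

/-- `M_n(p^h)`: solutions of `Σ T(yᵢ)^k ≡ n (mod p^h)` with `1 ≤ yᵢⱼ ≤ p^h`. -/
def Mn (k s p h n : ℕ) : ℕ :=
  Nat.card {Y : Fin s → Fin 3 → ℕ // (∀ i j, 1 ≤ Y i j ∧ Y i j ≤ p ^ h) ∧
    (∑ i, Tn (Y i) ^ k) ≡ n [MOD p ^ h]}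

/-- `M_n^*(p^h)`: as `M_n(p^h)`, with additionally `p ∤ y₁,₁` and `p ∤ T(y₁)`. -/
def MnStar (k s p h n : ℕ) [NeZero s] : ℕ :=
  Nat.card {Y : Fin s → Fin 3 → ℕ // (∀ i j, 1 ≤ Y i j ∧ Y i j ≤ p ^ h) ∧
    (∑ i, Tn (Y i) ^ k) ≡ n [MOD p ^ h] ∧ ¬ p ∣ Y 0 0 ∧ ¬ p ∣ Tn (Y 0)}


/-
Modulo a prime `p` there are at least `(p + 2) / 3` cubes, so by Cauchy–Davenport every residue
is a sum of three cubes, the first of them nonzero after reordering (and `0 = 1³ + (-1)³ + 0³`).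
Since `3x²` is a unit modulo `p ≠ 3`, Newton's step `x ↦ x + t pʰ` lifts a solution of
`x³ ≡ c (mod pʰ)` with `p ∤ x` to one modulo `pʰ⁺¹`. For `p = 3` the step `x ↦ x + t 3ʰ⁻¹` works
as soon as `h ≥ 2`, so everything reduces to the computation modulo `9`.
-/

open scoped Pointwise

theorem IsCoprime.exists_dvd_add_mul {R : Type*} [CommRing R] {p a : R} (hpa : IsCoprime p a)
    (m : R) : ∃ t, p ∣ m + a * t := by
  obtain ⟨u, v, huv⟩ := hpa
  exact ⟨-m * v, u * m, by linear_combination (-m) * huv⟩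

theorem card_filter_pow_eq_le {R : Type*} [CommRing R] [IsDomain R] [Fintype R] [DecidableEq R]
    {n : ℕ} (hn : 0 < n) (a : R) : #{x : R | x ^ n = a} ≤ n :=
  calc #{x : R | x ^ n = a}
      ≤ #(Polynomial.nthRootsFinset n a) :=
        card_le_card fun x hx => (Polynomial.mem_nthRootsFinset hn a).mpr (mem_filter.mp hx).2
    _ ≤ Multiset.card (Polynomial.nthRoots n a) := by
        rw [Polynomial.nthRootsFinset_def]; exact Multiset.toFinset_card_le _
    _ ≤ n := Polynomial.card_nthRoots n a

section CubesModPrime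

variable {p : ℕ} [Fact p.Prime]

def cubes (p : ℕ) [Fact p.Prime] : Finset (ZMod p) := univ.image (· ^ 3)

theorem zero_mem_cubes : (0 : ZMod p) ∈ cubes p :=
  mem_image.mpr ⟨0, mem_univ _, zero_pow three_ne_zero⟩

theorem add_two_le_three_mul_card_cubes : p + 2 ≤ 3 * #(cubes p) := by
  have hfibres : #(univ : Finset (ZMod p)) = ∑ a ∈ cubes p, #{x : ZMod p | x ^ 3 = a} :=
    card_eq_sum_card_fiberwise fun x _ => mem_image_of_mem _ (mem_univ x)
  have hzero : #{x : ZMod p | x ^ 3 = 0} = 1 := by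
    rw [card_eq_one]; exact ⟨0, by ext x; simp⟩
  have hnonzero : ∑ a ∈ (cubes p).erase 0, #{x : ZMod p | x ^ 3 = a} ≤ 3 * (#(cubes p) - 1) :=
    calc _ ≤ ∑ _a ∈ (cubes p).erase 0, 3 := sum_le_sum fun a _ => card_filter_pow_eq_le three_pos a
      _ = 3 * (#(cubes p) - 1) := by
        rw [sum_const, card_erase_of_mem zero_mem_cubes, smul_eq_mul, mul_comm]
  rw [card_univ, ZMod.card, ← add_sum_erase _ _ zero_mem_cubes, hzero] at hfibres
  have := card_pos.mpr ⟨0, zero_mem_cubes (p := p)⟩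
  omega

theorem cubes_add_cubes_add_cubes : cubes p + cubes p + cubes p = univ := by
  have hp : p.Prime := Fact.out
  have hne : (cubes p).Nonempty := ⟨0, zero_mem_cubes⟩
  have h2 := ZMod.cauchy_davenport hp hne hne
  have h3 := ZMod.cauchy_davenport hp (hne.add hne) hne
  have hle2 := card_le_univ (cubes p + cubes p)
  have hle3 := card_le_univ (cubes p + cubes p + cubes p)
  have := add_two_le_three_mul_card_cubes (p := p)
  rw [ZMod.card] at hle2 hle3
  apply eq_univ_of_card
  rw [ZMod.card]
  omega

theorem exists_cube_add_cube_add_cube_eq (y : ZMod p) :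
    ∃ a b c : ZMod p, a ≠ 0 ∧ a ^ 3 + b ^ 3 + c ^ 3 = y := by
  rcases eq_or_ne y 0 with rfl | hy
  · exact ⟨1, -1, 0, one_ne_zero, by ring⟩
  obtain ⟨a, b, c, habc⟩ : ∃ a b c : ZMod p, a ^ 3 + b ^ 3 + c ^ 3 = y := by
    have : y ∈ cubes p + cubes p + cubes p := by
      rw [cubes_add_cubes_add_cubes]; exact mem_univ y
    simpa [cubes, mem_add] using this
  rcases ne_or_eq a 0 with ha | rfl
  · exact ⟨a, b, c, ha, habc⟩
  rcases ne_or_eq b 0 with hb | rfl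
  · exact ⟨b, 0, c, hb, by rw [← habc]; ring⟩
  refine ⟨c, 0, 0, fun hc => hy ?_, by rw [← habc]; ring⟩
  rw [← habc, hc]
  ring

end CubesModPrime

-- With `3 pᵉ = pʰ a`, the linear term of `(x + t pᵉ)³ - c` is `pʰ a x² t`; this covers `e = h` for
-- `p ≠ 3` and `e = h - 1` for `p = 3`.
theorem exists_cube_sub_dvd_pow_succ {p : ℕ} (hp : p.Prime) {x c a : ℤ} {h e : ℕ}
    (hx : ¬ (p : ℤ) ∣ x) (ha : ¬ (p : ℤ) ∣ a) (h3 : 3 * (p : ℤ) ^ e = p ^ h * a)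
    (he : h + 1 ≤ 3 * e) (hc : (p : ℤ) ^ h ∣ x ^ 3 - c) :
    ∃ x', ¬ (p : ℤ) ∣ x' ∧ (p : ℤ) ^ (h + 1) ∣ x' ^ 3 - c := by
  have hp' : Prime (p : ℤ) := Nat.prime_iff_prime_int.mp hp
  obtain ⟨m, hm⟩ := hc
  have hax : ¬ (p : ℤ) ∣ a * x ^ 2 := hp'.not_dvd_mul ha fun hdvd => hx (hp'.dvd_of_dvd_pow hdvd)
  obtain ⟨t, k, hk⟩ := IsCoprime.exists_dvd_add_mul (hp'.coprime_iff_not_dvd.mpr hax) m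
  refine ⟨x + t * p ^ e, fun hdvd => hx ?_, ?_⟩
  · exact (dvd_add_left (dvd_mul_of_dvd_right (dvd_pow_self _ (by omega)) t)).mp hdvd
  have hexpand : (x + t * p ^ e) ^ 3 - c =
      p ^ h * (m + a * x ^ 2 * t) + p ^ (h + e) * (a * x * t ^ 2) + p ^ (3 * e) * t ^ 3 := by
    rw [pow_add, pow_mul']
    linear_combination hm + (x ^ 2 * t + x * t ^ 2 * p ^ e) * h3
  rw [hexpand, hk]
  refine dvd_add (dvd_add ⟨k, by ring⟩ ?_) ?_ <;>
    exact dvd_mul_of_dvd_left (pow_dvd_pow _ (by omega)) _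

theorem mem_M33_iff {n p : ℕ} (hpn : p ∣ n) {y : ZMod n} :
    y ∈ M33 n p ↔
      ∃ a b c : ZMod n, ZMod.castHom hpn (ZMod p) a ≠ 0 ∧ a ^ 3 + b ^ 3 + c ^ 3 = y := by
  constructor
  · rintro ⟨x, hx, rfl⟩
    refine ⟨x 0, x 1, x 2, ?_, by push_cast; ring⟩
    rwa [map_intCast, Ne, ZMod.intCast_zmod_eq_zero_iff_dvd]
  · rintro ⟨a, b, c, ha, rfl⟩
    obtain ⟨A, rfl⟩ := ZMod.intCast_surjective a
    obtain ⟨B, rfl⟩ := ZMod.intCast_surjective b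
    obtain ⟨C, rfl⟩ := ZMod.intCast_surjective c
    rw [map_intCast, Ne, ZMod.intCast_zmod_eq_zero_iff_dvd] at ha
    exact ⟨![A, B, C], ha, by push_cast; rfl⟩

theorem M33_prime_eq_univ {p : ℕ} (hp : p.Prime) : M33 p p = Set.univ := by
  have := Fact.mk hp
  refine Set.eq_univ_of_forall fun y => (mem_M33_iff dvd_rfl).mpr ?_
  simpa only [ZMod.castHom_self, RingHom.id_apply] using exists_cube_add_cube_add_cube_eq y

-- The cubes modulo `9` are `0, ±1` and those of units are `±1`, so the sums are `-3, …, 3`.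
theorem M33_nine : M33 9 3 = {y | y.val ≠ 4 ∧ y.val ≠ 5} := by
  ext y
  rw [mem_M33_iff (by norm_num : 3 ∣ 9), Set.mem_ofPred_eq]
  revert y
  decide

theorem intCast_mem_M33_pow_succ {p h e : ℕ} (hp : p.Prime) {a : ℤ} (ha : ¬ (p : ℤ) ∣ a)
    (h3 : 3 * (p : ℤ) ^ e = p ^ h * a) (he : h + 1 ≤ 3 * e) {Y : ℤ}
    (hY : (Y : ZMod (p ^ h)) ∈ M33 (p ^ h) p) :
    (Y : ZMod (p ^ (h + 1))) ∈ M33 (p ^ (h + 1)) p := by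
  obtain ⟨x, hx, hxY⟩ := hY
  rw [eq_comm, ZMod.intCast_eq_intCast_iff_dvd_sub, Nat.cast_pow] at hxY
  obtain ⟨x', hx', hdvd⟩ := exists_cube_sub_dvd_pow_succ (c := Y - x 1 ^ 3 - x 2 ^ 3) hp hx ha h3 he
    (by convert hxY using 1; ring)
  refine ⟨![x', x 1, x 2], hx', ?_⟩
  rw [eq_comm, ZMod.intCast_eq_intCast_iff_dvd_sub, Nat.cast_pow]
  convert hdvd using 1
  simp only [Matrix.cons_val_zero, Matrix.cons_val_one, Matrix.cons_val]
  ring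

theorem M33_prime_pow_eq_univ {p h : ℕ} (hp : p.Prime) (hp3 : p ≠ 3) (hh : 1 ≤ h) :
    M33 (p ^ h) p = Set.univ := by
  have h3 : ¬ (p : ℤ) ∣ 3 := fun hdvd =>
    hp3 ((Nat.prime_dvd_prime_iff_eq hp Nat.prime_three).mp (by exact_mod_cast hdvd))
  refine Set.eq_univ_of_forall fun y => ?_
  obtain ⟨Y, rfl⟩ := ZMod.intCast_surjective y
  induction h, hh using Nat.le_induction with
  | base => rw [pow_one, M33_prime_eq_univ hp]; trivial
  | succ h hh ih => exact intCast_mem_M33_pow_succ hp h3 (mul_comm _ _) (by omega) ih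

theorem intCast_mem_M33_three_pow {Y : ℤ} (hY : (Y : ZMod 9) ∈ M33 9 3) {h : ℕ} (hh : 2 ≤ h) :
    (Y : ZMod (3 ^ h)) ∈ M33 (3 ^ h) 3 := by
  induction h, hh using Nat.le_induction with
  | base => exact hY
  | succ h hh ih =>
    obtain ⟨e, rfl⟩ : ∃ e, h = e + 1 := ⟨h - 1, by omega⟩
    exact intCast_mem_M33_pow_succ Nat.prime_three (a := 1) (by norm_num) (by push_cast; ring)
      (by omega) ih

theorem M33_three_pow {h : ℕ} (hh : 2 ≤ h) :
    M33 (3 ^ h) 3 = {y : ZMod (3 ^ h) | y.val % 9 ≠ 4 ∧ y.val % 9 ≠ 5} := by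
  have h9 : 9 ∣ 3 ^ h := pow_dvd_pow 3 hh
  ext y
  have hval : (ZMod.castHom h9 (ZMod 9) y).val = y.val % 9 := by
    rw [ZMod.castHom_apply, ZMod.cast_eq_val, ZMod.val_natCast]
  constructor
  · rintro ⟨x, hx, rfl⟩
    have hx9 : ZMod.castHom h9 (ZMod 9) _ ∈ M33 9 3 := ⟨x, hx, (map_intCast _ _).symm⟩
    rwa [M33_nine, Set.mem_ofPred_eq, hval] at hx9
  · intro hy
    have hY : ((y.val : ℤ) : ZMod 9) ∈ M33 9 3 := by
      rwa [M33_nine, Set.mem_ofPred_eq, Int.cast_natCast, ZMod.val_natCast]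
    simpa using intCast_mem_M33_three_pow hY hh

/-- Description of `ℳ_{3,3}(p^h)`. -/
theorem statement8 (p : ℕ) (hp : p.Prime) (h : ℕ) (hh : 1 ≤ h) :
    (p ≠ 3 → M33 (p ^ h) p = Set.univ) ∧
    (p = 3 →
      (h = 1 → M33 (p ^ h) p = Set.univ) ∧
      (2 ≤ h → M33 (p ^ h) p = {y : ZMod (p ^ h) | y.val % 9 ≠ 4 ∧ y.val % 9 ≠ 5})) := by
  refine ⟨fun hp3 => M33_prime_pow_eq_univ hp hp3 hh, ?_⟩
  rintro rfl
  refine ⟨?_, M33_three_pow⟩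
  rintro rfl
  rw [pow_one]
  exact M33_prime_eq_univ hp

end
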